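/- Let Σ be a real symmetric positive definite 2n×2n matrix and η > 0. The Hermitian matrix Σ + (iη/2)J is positive semidefinite if and only if η ≤ 2λ_min, where λ_min is the smallest symplectic eigenvalue of Σ (i.e., the smallest positive number λ such that ±iλ is an eigenvalue of JΣ). -/

import Mathlib

open scoped ComplexOrder

noncomputable section

/-- The standard symplectic matrix `J = [[0, Iₙ], [−Iₙ, 0]]`. -/
def Jmat (n : ℕ) : Matrix (Fin n ⊕ Fin n) (Fin n ⊕ Fin n) ℝ :=
  Matrix.fromBlocks 0 1 (-1) 0

/-- `lam` is a symplectic eigenvalue of `S` when `i·lam` is an eigenvalue of `JS`. -/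
def IsSymplecticEigenvalue {n : ℕ}
    (S : Matrix (Fin n ⊕ Fin n) (Fin n ⊕ Fin n) ℝ) (lam : ℝ) : Prop :=
  ∃ v : (Fin n ⊕ Fin n) → ℂ, v ≠ 0 ∧
    ((Jmat n).map Complex.ofReal * S.map Complex.ofReal).mulVec v
      = (Complex.I * (lam : ℂ)) • v

/-!
Since `S` is positive definite, one congruence `Q` turns `S` into the identity and the Hermitian
matrix `iJ` into a real diagonal matrix. Hence `S + t·iJ` is positive semidefinite iff
`1 + tμ ≥ 0` for every generalized eigenvalue `μ` of `iJ` relative to `S` (`iJx = μSx`).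
Applying `J` to `JSx = iλx` shows that these `μ` are exactly the numbers `-1/λ`, `λ` a symplectic
eigenvalue. For `t > 0` only the negative `μ`, i.e. the positive `λ`, constrain `t`, and the
condition becomes `t ≤ λ_min`.
-/

open Matrix

section Pencil

open scoped MatrixOrder

variable {𝕜 ι : Type*} [RCLike 𝕜] [Fintype ι] [DecidableEq ι]

theorem Matrix.PosDef.exists_isUnit_eq_star_mul_self {A : Matrix ι ι 𝕜} (hA : A.PosDef) :
    ∃ R : Matrix ι ι 𝕜, IsUnit R ∧ A = star R * R :=
  ⟨CFC.sqrt A, (CFC.isUnit_sqrt_iff A hA.posSemidef.nonneg).mpr hA.isUnit, by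
    rw [(CFC.sqrt_nonneg A).isSelfAdjoint.star_eq, CFC.sqrt_mul_sqrt_self A hA.posSemidef.nonneg]⟩

theorem Matrix.PosDef.exists_simultaneous_diagonalization {A B : Matrix ι ι 𝕜} (hA : A.PosDef)
    (hB : B.IsHermitian) :
    ∃ (Q : Matrix ι ι 𝕜) (d : ι → ℝ), IsUnit Q ∧ star Q * A * Q = 1 ∧
      star Q * B * Q = diagonal (RCLike.ofReal ∘ d) := by
  obtain ⟨R, hR, rfl⟩ := hA.exists_isUnit_eq_star_mul_self
  have hRR : R * R⁻¹ = 1 := mul_nonsing_inv R ((isUnit_iff_isUnit_det R).mp hR)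
  have hK : (star R⁻¹ * B * R⁻¹).IsHermitian := by
    simpa [star_eq_conjTranspose] using isHermitian_conjTranspose_mul_mul R⁻¹ hB
  obtain ⟨U, hU, hUK⟩ : ∃ U : Matrix ι ι 𝕜, star U * U = 1 ∧
      star U * (star R⁻¹ * B * R⁻¹) * U = diagonal (RCLike.ofReal ∘ hK.eigenvalues) :=
    ⟨_, Unitary.coe_star_mul_self _, by simpa using hK.conjStarAlgAut_star_eigenvectorUnitary⟩
  have hQA : star (R⁻¹ * U) * (star R * R) * (R⁻¹ * U) = 1 :=
    calc star (R⁻¹ * U) * (star R * R) * (R⁻¹ * U)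
        = star U * star (R * R⁻¹) * (R * R⁻¹) * U := by simp only [star_mul, mul_assoc]
      _ = 1 := by rw [hRR, star_one, mul_one, mul_one, hU]
  refine ⟨R⁻¹ * U, hK.eigenvalues, ?_, hQA, ?_⟩
  · exact (isUnit_iff_isUnit_det _).mpr (isUnit_det_of_left_inverse hQA)
  · rw [← hUK]
    simp only [star_mul, mul_assoc]

theorem Matrix.PosDef.posSemidef_add_smul_iff {A B : Matrix ι ι 𝕜} (hA : A.PosDef)
    (hB : B.IsHermitian) (t : ℝ) :
    (A + (t : 𝕜) • B).PosSemidef ↔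
      ∀ (μ : ℝ) (x : ι → 𝕜), x ≠ 0 → B *ᵥ x = (μ : 𝕜) • A *ᵥ x → 0 ≤ 1 + t * μ := by
  constructor
  · intro h μ x hx hBx
    have hquad : star x ⬝ᵥ (A + (t : 𝕜) • B) *ᵥ x =
        ((1 + t * μ : ℝ) : 𝕜) * (star x ⬝ᵥ A *ᵥ x) := by
      rw [add_mulVec, smul_mulVec, hBx, dotProduct_add, dotProduct_smul, dotProduct_smul]
      push_cast
      simp only [smul_eq_mul]
      ring
    have hnonneg := h.re_dotProduct_nonneg x
    rw [hquad, RCLike.re_ofReal_mul] at hnonneg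
    exact nonneg_of_mul_nonneg_left hnonneg (hA.re_dotProduct_pos hx)
  · intro h
    obtain ⟨Q, d, hQ, hQA, hQB⟩ := hA.exists_simultaneous_diagonalization hB
    have hcongr :
        star Q * (A + (t : 𝕜) • B) * Q = diagonal (fun i => ((1 + t * d i : ℝ) : 𝕜)) := by
      rw [mul_add, add_mul, Matrix.mul_smul, Matrix.smul_mul, hQA, hQB]
      ext i j
      by_cases hij : i = j <;> simp [hij]
    have heig (i : ι) :
        B *ᵥ (Q *ᵥ Pi.single i 1) = (d i : 𝕜) • A *ᵥ (Q *ᵥ Pi.single i 1) := by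
      apply mulVec_injective_iff_isUnit.mpr hQ.star
      simp only [mulVec_smul, mulVec_mulVec, ← Matrix.mul_assoc]
      rw [hQA, hQB, diagonal_mulVec_single, one_mulVec]
      ext j
      by_cases hij : j = i <;> simp [hij]
    rw [← hQ.posSemidef_star_left_conjugate_iff, hcongr, posSemidef_diagonal_iff]
    intro i
    refine RCLike.ofReal_nonneg.mpr (h (d i) _ ?_ (heig i))
    rw [Ne, ← mulVec_zero Q, (mulVec_injective_iff_isUnit.mpr hQ).eq_iff]
    simp

end Pencil

theorem conjTranspose_map_ofReal {m n : Type*} (A : Matrix m n ℝ) :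
    (A.map Complex.ofReal)ᴴ = Aᵀ.map Complex.ofReal := by
  ext i j
  simp

theorem Matrix.PosDef.map_ofReal {ι : Type*} [Fintype ι] [DecidableEq ι] {S : Matrix ι ι ℝ}
    (hS : S.PosDef) : (S.map Complex.ofReal).PosDef := by
  obtain ⟨R, hR, rfl⟩ := hS.exists_isUnit_eq_star_mul_self
  have hRc : IsUnit (R.map Complex.ofReal) := hR.map Complex.ofRealHom.mapMatrix
  have hmap : (star R * R).map Complex.ofReal =
      (R.map Complex.ofReal)ᴴ * R.map Complex.ofReal := by
    rw [conjTranspose_map_ofReal]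
    exact Matrix.map_mul (f := Complex.ofRealHom)
  rw [hmap]
  exact PosDef.conjTranspose_mul_self _ (mulVec_injective_iff_isUnit.mpr hRc)

theorem Jmat_mul_self (n : ℕ) : Jmat n * Jmat n = -1 := by
  rw [Jmat, fromBlocks_multiply, ← fromBlocks_one, fromBlocks_neg]
  simp

theorem Jmat_transpose (n : ℕ) : (Jmat n)ᵀ = -Jmat n := by
  rw [Jmat, fromBlocks_transpose, fromBlocks_neg]
  simp

theorem map_Jmat_mul_self (n : ℕ) :
    (Jmat n).map Complex.ofReal * (Jmat n).map Complex.ofReal = -1 := by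
  have := congrArg Complex.ofRealHom.mapMatrix (Jmat_mul_self n)
  rwa [map_mul, map_neg, map_one] at this

theorem isHermitian_I_smul_map_Jmat (n : ℕ) :
    (Complex.I • (Jmat n).map Complex.ofReal).IsHermitian := by
  rw [IsHermitian, conjTranspose_smul, conjTranspose_map_ofReal, Jmat_transpose]
  simp [Matrix.map_neg]

theorem map_Jmat_mulVec_eq_iff {n : ℕ} (y z : Fin n ⊕ Fin n → ℂ) :
    (Jmat n).map Complex.ofReal *ᵥ y = z ↔ y = -((Jmat n).map Complex.ofReal *ᵥ z) := by
  constructor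
  · rintro rfl
    rw [mulVec_mulVec, map_Jmat_mul_self, neg_mulVec, one_mulVec, neg_neg]
  · rintro rfl
    rw [mulVec_neg, mulVec_mulVec, map_Jmat_mul_self, neg_mulVec, one_mulVec, neg_neg]

theorem isSymplecticEigenvalue_iff {n : ℕ} (S : Matrix (Fin n ⊕ Fin n) (Fin n ⊕ Fin n) ℝ)
    {lam : ℝ} (hlam : lam ≠ 0) :
    IsSymplecticEigenvalue S lam ↔ ∃ x ≠ 0, (Complex.I • (Jmat n).map Complex.ofReal) *ᵥ x =
      ((-lam⁻¹ : ℝ) : ℂ) • S.map Complex.ofReal *ᵥ x := by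
  refine exists_congr fun x => and_congr_right fun _ => ?_
  have hc : ((-lam⁻¹ : ℝ) : ℂ) ≠ 0 := by simpa using hlam
  have hscalar : ((-lam⁻¹ : ℝ) : ℂ)⁻¹ * Complex.I = -(Complex.I * lam) := by
    push_cast
    field_simp
  rw [← mulVec_mulVec, map_Jmat_mulVec_eq_iff, eq_comm (b := _ • _),
    ← eq_inv_smul_iff₀ hc, mulVec_smul, smul_mulVec, smul_smul, hscalar, neg_smul]

theorem posSemidef_iff_le_two_symplectic_eigenvalue_general {n : ℕ}
    (S : Matrix (Fin n ⊕ Fin n) (Fin n ⊕ Fin n) ℝ)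
    (hpd : S.PosDef)
    (η : ℝ) (hη : 0 < η)
    (lmin : ℝ) (hlpos : 0 < lmin) (hleig : IsSymplecticEigenvalue S lmin)
    (hlmin : ∀ lam : ℝ, 0 < lam → IsSymplecticEigenvalue S lam → lmin ≤ lam) :
    (S.map Complex.ofReal
        + (((η / 2 : ℝ) : ℂ) * Complex.I) • (Jmat n).map Complex.ofReal).PosSemidef
      ↔ η ≤ 2 * lmin := by
  rw [mul_smul]
  refine (hpd.map_ofReal.posSemidef_add_smul_iff (isHermitian_I_smul_map_Jmat n) (η / 2)).trans ?_
  constructor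
  · intro h
    obtain ⟨v, hv, hv_eig⟩ := (isSymplecticEigenvalue_iff S hlpos.ne').mp hleig
    have := h (-lmin⁻¹) v hv hv_eig
    field_simp at this
    linarith
  · intro hle μ x hx hx_eig
    rcases le_or_gt 0 μ with hμ | hμ
    · positivity
    have hsymp : IsSymplecticEigenvalue S (-μ⁻¹) :=
      (isSymplecticEigenvalue_iff S (by simpa using hμ.ne)).mpr ⟨x, hx, by simpa using hx_eig⟩
    have hlmin_le : lmin ≤ -μ⁻¹ := hlmin _ (by simpa using hμ) hsymp
    have : lmin * -μ ≤ 1 :=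
      calc lmin * -μ ≤ -μ⁻¹ * -μ := mul_le_mul_of_nonneg_right hlmin_le (by linarith)
        _ = 1 := by rw [neg_mul_neg, inv_mul_cancel₀ hμ.ne]
    nlinarith

/-- For a real symmetric positive definite `2n×2n` matrix `S` and `η > 0`, the
Hermitian matrix `S + (iη/2)J` is positive semidefinite if and only if
`η ≤ 2λ_min`, `λ_min` being the smallest symplectic eigenvalue of `S`. -/
theorem posSemidef_iff_le_two_symplectic_eigenvalue {n : ℕ}
    (S : Matrix (Fin n ⊕ Fin n) (Fin n ⊕ Fin n) ℝ)
    (hsymm : S.IsSymm) (hpd : S.PosDef)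
    (η : ℝ) (hη : 0 < η)
    (lmin : ℝ) (hlpos : 0 < lmin) (hleig : IsSymplecticEigenvalue S lmin)
    (hlmin : ∀ lam : ℝ, 0 < lam → IsSymplecticEigenvalue S lam → lmin ≤ lam) :
    (S.map Complex.ofReal
        + (((η / 2 : ℝ) : ℂ) * Complex.I) • (Jmat n).map Complex.ofReal).PosSemidef
      ↔ η ≤ 2 * lmin :=
  posSemidef_iff_le_two_symplectic_eigenvalue_general S hpd η hη lmin hlpos hleig hlmin

end
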